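/- arXiv:2002.07176 — 3 statements merged into one kernel-verified Lean document; each statement's English description precedes it below -/
import Mathlib

section
/- Let h be a dilation on R^n with positive integer weights r_1,...,r_n, i.e. h_t(x^1,...,x^n) = (t^{r_1}x^1,...,t^{r_n}x^n). If a smooth function f on R^n is homogeneous of weight a with respect to h (i.e. the weight vector field ∇^h = Σ_i r_i x^i ∂_{x^i} satisfies ∇^h(f) = a·f), then a is a non-negative integer and f is a polynomial in the coordinates x^1,...,x^n. -/
open Filter Topology

namespace HomogAux

variable {n : ℕ}

lemma clm_apply_eq_sum (L : (Fin n → ℝ) →L[ℝ] ℝ) (v : Fin n → ℝ) :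
    L v = ∑ i, v i * L (Pi.single i 1) := by
  have hv : v = ∑ i, v i • (Pi.single i 1 : Fin n → ℝ) := by
    funext j
    rw [Finset.sum_apply]
    simp [Pi.single_apply]
  conv_lhs => rw [hv, map_sum]
  simp [smul_eq_mul]

/-- Scaling identity from the Euler PDE. -/
lemma scaling (r : Fin n → ℕ) (hr : ∀ i, 0 < r i) {g : (Fin n → ℝ) → ℝ}
    (hg : ContDiff ℝ (⊤ : ℕ∞) g) {b : ℝ}
    (hhom : ∀ x, ∑ i, (r i : ℝ) * x i * fderiv ℝ g x (Pi.single i 1) = b * g x)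
    (x : Fin n → ℝ) {t : ℝ} (ht : 0 < t) :
    g (fun i => t ^ r i * x i) = t ^ b * g x := by
  set φ : ℝ → (Fin n → ℝ) := fun s i => s ^ r i * x i with hφ
  have hφd : ∀ s : ℝ, HasDerivAt φ (fun i => (r i : ℝ) * s ^ (r i - 1) * x i) s := by
    intro s
    rw [hasDerivAt_pi]
    intro i
    simpa using (hasDerivAt_pow (r i) s).mul_const (x i)
  have hgd : ∀ y, HasFDerivAt g (fderiv ℝ g y) y :=
    fun y => (hg.differentiable (by simp) y).hasFDerivAt
  have hH : ∀ s : ℝ, 0 < s → HasDerivAt (fun u => g (φ u)) (b / s * g (φ s)) s := by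
    intro s hs
    have h1 := (hgd (φ s)).comp_hasDerivAt s (hφd s)
    have h2 : fderiv ℝ g (φ s) (fun i => (r i : ℝ) * s ^ (r i - 1) * x i)
        = b / s * g (φ s) := by
      rw [clm_apply_eq_sum]
      have hterm : ∀ i : Fin n,
          ((r i : ℝ) * s ^ (r i - 1) * x i) * (fderiv ℝ g (φ s)) (Pi.single i 1)
          = s⁻¹ * ((r i : ℝ) * (φ s i) * (fderiv ℝ g (φ s)) (Pi.single i 1)) := by
        intro i
        have hri : 1 ≤ r i := hr i
        have hpow : s ^ (r i - 1) = s ^ r i / s := by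
          rw [eq_div_iff hs.ne', ← pow_succ]
          congr 1
          omega
        simp only [hφ]
        rw [hpow, div_eq_mul_inv]
        ring
      rw [Finset.sum_congr rfl (fun i _ => hterm i), ← Finset.mul_sum, hhom (φ s),
        div_eq_mul_inv]
      ring
    rw [h2] at h1
    exact h1
  have hGd : ∀ s ∈ Set.Ioi (0 : ℝ),
      HasDerivAt (fun u : ℝ => u ^ (-b) * g (φ u)) 0 s := by
    intro s hs
    have hs' : (0 : ℝ) < s := hs
    have h1 : HasDerivAt (fun u : ℝ => u ^ (-b)) (-b * s ^ (-b - 1)) s :=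
      Real.hasDerivAt_rpow_const (Or.inl hs'.ne')
    have h2 := h1.fun_mul (hH s hs')
    refine h2.congr_deriv (Eq.symm ?_)
    rw [Real.rpow_sub hs', Real.rpow_one]
    field_simp
    ring
  have hconst : ∀ s ∈ Set.Ioi (0 : ℝ), ∀ s' ∈ Set.Ioi (0 : ℝ),
      (fun u : ℝ => u ^ (-b) * g (φ u)) s = (fun u : ℝ => u ^ (-b) * g (φ u)) s' := by
    intro s hs s' hs'
    refine (convex_Ioi (0 : ℝ)).is_const_of_fderivWithin_eq_zero
      (fun u hu => ((hGd u hu).differentiableAt.differentiableWithinAt)) ?_ hs hs'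
    intro u hu
    rw [fderivWithin_of_isOpen isOpen_Ioi hu, (hGd u hu).hasFDerivAt.fderiv]
    ext
    simp
  have h1 : (fun u : ℝ => u ^ (-b) * g (φ u)) 1 = g x := by
    have hφ1 : φ 1 = x := by funext i; simp [hφ]
    simp [hφ1]
  have h2 := hconst t ht 1 (Set.mem_Ioi.mpr one_pos)
  rw [h1] at h2
  have h3 : t ^ (-b) * g (φ t) = g x := h2
  rw [Real.rpow_neg ht.le,
    inv_mul_eq_iff_eq_mul₀ (Real.rpow_pos_of_pos ht b).ne'] at h3
  exact h3

lemma tendsto_scale (r : Fin n → ℕ) (hr : ∀ i, 0 < r i) {g : (Fin n → ℝ) → ℝ}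
    (hg : Continuous g) (x : Fin n → ℝ) :
    Tendsto (fun t : ℝ => g (fun i => t ^ r i * x i)) (𝓝[>] 0) (𝓝 (g 0)) := by
  have h1 : Tendsto (fun t : ℝ => (fun i => t ^ r i * x i : Fin n → ℝ)) (𝓝 0)
      (𝓝 (0 : Fin n → ℝ)) := by
    rw [tendsto_pi_nhds]
    intro i
    have hc : Continuous fun t : ℝ => t ^ r i * x i :=
      (continuous_pow (r i)).mul continuous_const
    simpa [zero_pow (hr i).ne'] using hc.tendsto (0 : ℝ)
  exact (hg.tendsto 0).comp (h1.mono_left nhdsWithin_le_nhds)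

lemma zero_of_neg (r : Fin n → ℕ) (hr : ∀ i, 0 < r i) {g : (Fin n → ℝ) → ℝ}
    (hg : ContDiff ℝ (⊤ : ℕ∞) g) {b : ℝ} (hb : b < 0)
    (hhom : ∀ x, ∑ i, (r i : ℝ) * x i * fderiv ℝ g x (Pi.single i 1) = b * g x)
    (x : Fin n → ℝ) : g x = 0 := by
  have hlim1 : Tendsto (fun t : ℝ => t ^ (-b) * g (fun i => t ^ r i * x i)) (𝓝[>] 0)
      (𝓝 (0 * g 0)) := by
    refine Tendsto.mul ?_ (tendsto_scale r hr (hg.continuous) x)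
    have hcont : ContinuousAt (fun t : ℝ => t ^ (-b)) 0 :=
      Real.continuousAt_rpow_const 0 (-b) (Or.inr (by linarith))
    have h0 : (0 : ℝ) ^ (-b) = 0 := Real.zero_rpow (by linarith)
    simpa [h0] using (hcont.tendsto.mono_left nhdsWithin_le_nhds)
  have heq : ∀ᶠ t in 𝓝[>] (0 : ℝ),
      t ^ (-b) * g (fun i => t ^ r i * x i) = g x := by
    filter_upwards [self_mem_nhdsWithin] with t ht
    have ht' : (0 : ℝ) < t := ht
    rw [scaling r hr hg hhom x ht', ← mul_assoc, ← Real.rpow_add ht']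
    simp
  have hlim2 : Tendsto (fun _ : ℝ => g x) (𝓝[>] (0 : ℝ)) (𝓝 (0 * g 0)) :=
    hlim1.congr' heq
  have := tendsto_nhds_unique hlim2 tendsto_const_nhds
  simpa using this.symm

lemma const_of_zero (r : Fin n → ℕ) (hr : ∀ i, 0 < r i) {g : (Fin n → ℝ) → ℝ}
    (hg : ContDiff ℝ (⊤ : ℕ∞) g)
    (hhom : ∀ x, ∑ i, (r i : ℝ) * x i * fderiv ℝ g x (Pi.single i 1) = 0 * g x)
    (x : Fin n → ℝ) : g x = g 0 := by
  have heq : ∀ᶠ t in 𝓝[>] (0 : ℝ), g (fun i => t ^ r i * x i) = g x := by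
    filter_upwards [self_mem_nhdsWithin] with t ht
    have ht' : (0 : ℝ) < t := ht
    rw [scaling r hr hg hhom x ht']
    simp
  have hlim := (tendsto_scale r hr hg.continuous x).congr' heq
  exact (tendsto_nhds_unique hlim tendsto_const_nhds).symm

/-- The partial derivative of a solution of the Euler PDE solves it with shifted weight. -/
lemma pde_deriv (r : Fin n → ℕ) {f : (Fin n → ℝ) → ℝ} (hf : ContDiff ℝ (⊤ : ℕ∞) f) {a : ℝ}
    (hhom : ∀ x, ∑ i, (r i : ℝ) * x i * fderiv ℝ f x (Pi.single i 1) = a * f x) (j : Fin n) :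
    ∀ x, ∑ i, (r i : ℝ) * x i *
        fderiv ℝ (fun y => fderiv ℝ f y (Pi.single j 1)) x (Pi.single i 1)
      = (a - r j) * fderiv ℝ f x (Pi.single j 1) := by
  intro x
  have hfd : ∀ y, HasFDerivAt f (fderiv ℝ f y) y :=
    fun y => (hf.differentiable (by simp) y).hasFDerivAt
  have hf' : ContDiff ℝ (⊤ : ℕ∞) (fderiv ℝ f) := hf.fderiv_right (by simp)
  have hf'' : HasFDerivAt (fderiv ℝ f) (fderiv ℝ (fderiv ℝ f) x) x :=
    (hf'.differentiable (by simp) x).hasFDerivAt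
  set B := fderiv ℝ (fderiv ℝ f) x with hB
  have hsymm : ∀ v w, B v w = B w v := second_derivative_symmetric hfd hf''
  have hgd : ∀ i : Fin n, HasFDerivAt (fun y => fderiv ℝ f y (Pi.single i 1))
      (B.flip (Pi.single i 1)) x := by
    intro i
    have h := hf''.clm_apply (hasFDerivAt_const (Pi.single i 1 : Fin n → ℝ) x)
    have : (fderiv ℝ f x).comp (0 : (Fin n → ℝ) →L[ℝ] (Fin n → ℝ))
        + B.flip (Pi.single i 1) = B.flip (Pi.single i 1) := by
      simp
    rwa [this] at h
  have hFl : HasFDerivAt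
      (fun y => ∑ i, (r i : ℝ) * y i * fderiv ℝ f y (Pi.single i 1))
      (∑ i, (((r i : ℝ) * x i) • B.flip (Pi.single i 1)
          + (fderiv ℝ f x (Pi.single i 1)) • ((r i : ℝ) •
              (ContinuousLinearMap.proj i : (Fin n → ℝ) →L[ℝ] ℝ)))) x := by
    apply HasFDerivAt.fun_sum
    intro i _
    have h1 : HasFDerivAt (fun y : Fin n → ℝ => (r i : ℝ) * y i)
        ((r i : ℝ) • (ContinuousLinearMap.proj i : (Fin n → ℝ) →L[ℝ] ℝ)) x :=
      (ContinuousLinearMap.proj i : (Fin n → ℝ) →L[ℝ] ℝ).hasFDerivAt.const_mul _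
    exact h1.mul (hgd i)
  have hFr : HasFDerivAt (fun y => a * f y) (a • fderiv ℝ f x) x := (hfd x).const_mul a
  have hfun : (fun y => ∑ i, (r i : ℝ) * y i * fderiv ℝ f y (Pi.single i 1))
      = fun y => a * f y := funext hhom
  rw [hfun] at hFl
  have hLeq := hFl.unique hFr
  have heval := congrArg (fun T : (Fin n → ℝ) →L[ℝ] ℝ => T (Pi.single j 1)) hLeq
  simp only [ContinuousLinearMap.coe_sum', Finset.sum_apply,
    ContinuousLinearMap.add_apply, ContinuousLinearMap.coe_smul', Pi.smul_apply,
    ContinuousLinearMap.flip_apply, ContinuousLinearMap.proj_apply,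
    smul_eq_mul] at heval
  have hproj : ∀ i : Fin n, (Pi.single j 1 : Fin n → ℝ) i = if j = i then 1 else 0 := by
    intro i; simp [Pi.single_apply, eq_comm]
  have hsum2 : ∑ i, fderiv ℝ f x (Pi.single i 1) *
      ((r i : ℝ) * (Pi.single j 1 : Fin n → ℝ) i)
      = (r j : ℝ) * fderiv ℝ f x (Pi.single j 1) := by
    rw [Finset.sum_congr rfl (fun i _ => by rw [hproj i])]
    simp [mul_ite, Finset.sum_ite_eq, mul_comm]
  rw [Finset.sum_add_distrib, hsum2] at heval
  have hrw : ∀ i : Fin n,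
      fderiv ℝ (fun y => fderiv ℝ f y (Pi.single j 1)) x (Pi.single i 1)
      = B (Pi.single j 1) (Pi.single i 1) := by
    intro i
    rw [(hgd j).fderiv]
    simp [ContinuousLinearMap.flip_apply, hsymm]
  calc ∑ i, (r i : ℝ) * x i *
        fderiv ℝ (fun y => fderiv ℝ f y (Pi.single j 1)) x (Pi.single i 1)
      = ∑ i, (r i : ℝ) * x i * B (Pi.single j 1) (Pi.single i 1) := by
        exact Finset.sum_congr rfl fun i _ => by rw [hrw i]
    _ = a * fderiv ℝ f x (Pi.single j 1) - (r j : ℝ) * fderiv ℝ f x (Pi.single j 1) := by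
        linarith [heval]
    _ = (a - r j) * fderiv ℝ f x (Pi.single j 1) := by ring

lemma smooth_partial {f : (Fin n → ℝ) → ℝ} (hf : ContDiff ℝ (⊤ : ℕ∞) f) (i : Fin n) :
    ContDiff ℝ (⊤ : ℕ∞) (fun y => fderiv ℝ f y (Pi.single i 1)) :=
  (hf.fderiv_right (by simp)).clm_apply contDiff_const

/-- The induction giving polynomiality. -/
lemma poly_of_lt (r : Fin n → ℕ) (hr : ∀ i, 0 < r i) :
    ∀ (k : ℕ) (f : (Fin n → ℝ) → ℝ), ContDiff ℝ (⊤ : ℕ∞) f → ∀ a : ℝ,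
      (∀ x, ∑ i, (r i : ℝ) * x i * fderiv ℝ f x (Pi.single i 1) = a * f x) →
      a < k → ∃ p : MvPolynomial (Fin n) ℝ, ∀ x, f x = MvPolynomial.eval x p := by
  intro k
  induction k with
  | zero =>
    intro f hf a hhom ha
    refine ⟨0, fun x => ?_⟩
    have hb : a < 0 := by exact_mod_cast ha
    rw [zero_of_neg r hr hf hb hhom x]
    simp
  | succ k ih =>
    intro f hf a hhom ha
    by_cases h0 : a = 0
    · subst h0
      refine ⟨MvPolynomial.C (f 0), fun x => ?_⟩
      rw [MvPolynomial.eval_C]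
      exact const_of_zero r hr hf hhom x
    · have hpi : ∀ i : Fin n, ∃ p : MvPolynomial (Fin n) ℝ,
          ∀ x, fderiv ℝ f x (Pi.single i 1) = MvPolynomial.eval x p := by
        intro i
        refine ih (fun y => fderiv ℝ f y (Pi.single i 1)) (smooth_partial hf i)
          (a - r i) (pde_deriv r hf hhom i) ?_
        have h1 : (1 : ℝ) ≤ (r i : ℝ) := by exact_mod_cast hr i
        have h2 : a < (k : ℝ) + 1 := by exact_mod_cast ha
        linarith
      choose p hp using hpi
      refine ⟨MvPolynomial.C a⁻¹ *
        ∑ i, MvPolynomial.C (r i : ℝ) * MvPolynomial.X i * p i, fun x => ?_⟩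
      have hx := hhom x
      rw [Finset.sum_congr rfl (fun i _ => by rw [hp i])] at hx
      rw [map_mul, MvPolynomial.eval_C, map_sum]
      have : ∀ i : Fin n, MvPolynomial.eval x
          (MvPolynomial.C (r i : ℝ) * MvPolynomial.X i * p i)
          = (r i : ℝ) * x i * MvPolynomial.eval x (p i) := by
        intro i; simp [mul_assoc]
      rw [Finset.sum_congr rfl (fun i _ => this i), hx]
      field_simp

lemma eval_aeval_poly (g : Fin n → Polynomial ℝ) (p : MvPolynomial (Fin n) ℝ) (t : ℝ) :
    Polynomial.eval t (MvPolynomial.aeval g p)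
      = MvPolynomial.eval (fun i => Polynomial.eval t (g i)) p := by
  induction p using MvPolynomial.induction_on with
  | C c => simp
  | add p q hp hq => simp [hp, hq]
  | mul_X p i hp => simp [hp]

lemma exp_eq_natDegree {q : Polynomial ℝ} {c a : ℝ} (hc : c ≠ 0)
    (h : ∀ t : ℝ, 0 < t → Polynomial.eval t q = t ^ a * c) : a = (q.natDegree : ℝ) := by
  have hq1 : Polynomial.eval 1 q = c := by simpa using h 1 one_pos
  have hq0 : q ≠ 0 := by
    intro h0
    apply hc
    rw [h0, Polynomial.eval_zero] at hq1
    exact hq1.symm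
  set d := q.natDegree with hd
  have hdeg : q.degree = ((Polynomial.X : Polynomial ℝ) ^ d).degree := by
    rw [Polynomial.degree_X_pow, Polynomial.degree_eq_natDegree hq0]
  have hlim : Tendsto (fun t : ℝ => Polynomial.eval t q / Polynomial.eval t (Polynomial.X ^ d))
      atTop (𝓝 (q.leadingCoeff / ((Polynomial.X : Polynomial ℝ) ^ d).leadingCoeff)) :=
    Polynomial.div_tendsto_leadingCoeff_div_of_degree_eq _ _ hdeg
  have hL : q.leadingCoeff ≠ 0 := Polynomial.leadingCoeff_ne_zero.mpr hq0
  have hlim2 : Tendsto (fun t : ℝ => t ^ (a - (d : ℝ))) atTop (𝓝 (q.leadingCoeff / c)) := by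
    have heq : ∀ᶠ t : ℝ in atTop, Polynomial.eval t q / Polynomial.eval t (Polynomial.X ^ d)
        = c * t ^ (a - (d : ℝ)) := by
      filter_upwards [eventually_gt_atTop (0 : ℝ)] with t ht
      rw [h t ht, Polynomial.eval_pow, Polynomial.eval_X, Real.rpow_sub ht,
        Real.rpow_natCast]
      ring
    have hlc : ((Polynomial.X : Polynomial ℝ) ^ d).leadingCoeff = 1 :=
      Polynomial.monic_X_pow d
    rw [hlc, div_one] at hlim
    have hlim' : Tendsto (fun t : ℝ => c * t ^ (a - (d : ℝ))) atTop
        (𝓝 q.leadingCoeff) := hlim.congr' heq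
    have hthis := hlim'.const_mul c⁻¹
    have heq2 : (fun t : ℝ => c⁻¹ * (c * t ^ (a - (d : ℝ))))
        = fun t : ℝ => t ^ (a - (d : ℝ)) := by
      funext t
      rw [inv_mul_cancel_left₀ hc]
    rw [heq2] at hthis
    have hdiv : q.leadingCoeff / c = c⁻¹ * q.leadingCoeff := by
      rw [div_eq_mul_inv, mul_comm]
    rw [hdiv]
    exact hthis
  rcases lt_trichotomy a (d : ℝ) with hlt | heq | hgt
  · exfalso
    have hpos : 0 < (d : ℝ) - a := by linarith
    have h0 : Tendsto (fun t : ℝ => t ^ (a - (d : ℝ))) atTop (𝓝 0) := by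
      have := tendsto_rpow_neg_atTop hpos
      simpa [neg_sub] using this
    have := tendsto_nhds_unique hlim2 h0
    exact (div_ne_zero hL hc) this
  · exact heq
  · exfalso
    have hpos : 0 < a - (d : ℝ) := by linarith
    exact not_tendsto_atTop_of_tendsto_nhds hlim2 (tendsto_rpow_atTop hpos)

end HomogAux

/-- If a smooth nonzero function `f` on ℝⁿ satisfies `∇ʰ(f) = a·f`
for the weight vector field `∇ʰ = Σᵢ rᵢ xⁱ ∂ᵢ` of a positive dilation, then `a` is a
non-negative integer and `f` is a polynomial in the coordinates. -/
theorem homogeneous_smooth_is_polynomial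
    (n : ℕ) (r : Fin n → ℕ) (hr : ∀ i, 0 < r i)
    (f : (Fin n → ℝ) → ℝ) (hf : ContDiff ℝ (⊤ : ℕ∞) f) (hf0 : f ≠ 0) (a : ℝ)
    (hhom : ∀ x, ∑ i, (r i : ℝ) * x i * fderiv ℝ f x (Pi.single i 1) = a * f x) :
    (∃ m : ℕ, a = (m : ℝ)) ∧
      ∃ p : MvPolynomial (Fin n) ℝ, ∀ x, f x = MvPolynomial.eval x p := by
  obtain ⟨k, hk⟩ := exists_nat_gt a
  obtain ⟨p, hp⟩ := HomogAux.poly_of_lt r hr k f hf a hhom hk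
  obtain ⟨x0, hx0⟩ := Function.ne_iff.mp hf0
  have hx0' : f x0 ≠ 0 := by simpa using hx0
  set q : Polynomial ℝ :=
    MvPolynomial.aeval (fun i => Polynomial.C (x0 i) * Polynomial.X ^ r i) p with hq
  have hqeval : ∀ t : ℝ, 0 < t → Polynomial.eval t q = t ^ a * f x0 := by
    intro t ht
    rw [hq, HomogAux.eval_aeval_poly]
    have h1 : (fun i => Polynomial.eval t (Polynomial.C (x0 i) * Polynomial.X ^ r i))
        = fun i => t ^ r i * x0 i := by
      funext i
      rw [Polynomial.eval_mul, Polynomial.eval_C, Polynomial.eval_pow, Polynomial.eval_X,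
        mul_comm]
    rw [h1, ← hp _]
    exact HomogAux.scaling r hr hf hhom x0 ht
  exact ⟨⟨q.natDegree, HomogAux.exp_eq_natDegree hx0' hqeval⟩, p, hp⟩
end

section
/- Let 𝔪 be a Lie algebra of vector fields on R^n containing all ∂_{x^i}, and let D be a derivation of 𝔪 with D(∂_u) = Σ_v F_u^v ∂_v where the functions F_u^v are polynomials. Then there exists a vector field Z = Σ_w F^w ∂_w with polynomial coefficients such that D(∂_u) = [Z, ∂_u] for all u. -/
open MvPolynomial

/-- Polynomial vector fields on ℝⁿ, given by their coefficient polynomials. -/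
abbrev VF (n : ℕ) := Fin n → MvPolynomial (Fin n) ℝ

/-- Lie bracket of polynomial vector fields. -/
noncomputable def bracket {n : ℕ} (V W : VF n) : VF n :=
  fun i => ∑ j, (V j * pderiv j (W i) - W j * pderiv j (V i))

/-- The weight (Euler) vector field ∇ʰ = Σᵢ rᵢ xⁱ ∂ᵢ of the dilation with weights r. -/
noncomputable def nabla {n : ℕ} (r : Fin n → ℕ) : VF n :=
  fun i => (r i : MvPolynomial (Fin n) ℝ) * X i

/-- A polynomial vector field is homogeneous of weight `a` w.r.t. the dilation `r`. -/
def IsHomog {n : ℕ} (r : Fin n → ℕ) (a : ℤ) (V : VF n) : Prop :=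
  bracket (nabla r) V = fun i => (a : ℝ) • V i

/-- The coordinate vector field ∂ᵢ. -/
noncomputable def coordVF {n : ℕ} (i : Fin n) : VF n := fun k => if k = i then 1 else 0

/-- The vector field f ∂ⱼ. -/
noncomputable def vfOf {n : ℕ} (f : MvPolynomial (Fin n) ℝ) (j : Fin n) : VF n :=
  fun k => if k = j then f else 0

/-- 𝔪 = g₋(h): the span of homogeneous polynomial vector fields of negative weight. -/
noncomputable def negPart {n : ℕ} (r : Fin n → ℕ) : Submodule ℝ (VF n) :=
  Submodule.span ℝ {V : VF n | ∃ k : ℤ, k < 0 ∧ IsHomog r k V}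

/-!
Applying the derivation `D` to `[∂ᵤ, ∂ₛ] = 0` gives `∂ᵤ(D ∂ₛ) = ∂ₛ(D ∂ᵤ)` componentwise, so for
each `w` the polynomial 1-form `Σᵤ (D ∂ᵤ)ʷ dxᵘ` is closed, hence exact: it has a polynomial
primitive `Pʷ`, built one variable at a time by antidifferentiation. Then `Z = -Σ Pʷ ∂_w`
satisfies `[Z, ∂ᵤ] = Σ ∂ᵤ Pʷ ∂_w = D ∂ᵤ`.
-/

namespace MvPolynomial

variable {σ K : Type*} [Field K]

theorem pderiv_pderiv_comm (i j : σ) (p : MvPolynomial σ K) :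
    pderiv i (pderiv j p) = pderiv j (pderiv i p) := by
  -- `⁅∂ᵢ, ∂ⱼ⁆` is again a derivation, and it kills every `X k`.
  have h : ⁅pderiv (R := K) i, pderiv (R := K) j⁆ = 0 := by
    classical
    ext k
    rw [Derivation.commutator_apply, pderiv_X, pderiv_X, Pi.single_apply, Pi.single_apply]
    split_ifs <;> simp
  simpa [Derivation.commutator_apply, sub_eq_zero] using DFunLike.congr_fun h p

noncomputable def antideriv (j : σ) : MvPolynomial σ K →ₗ[K] MvPolynomial σ K :=
  (basisMonomials σ K).constr K fun m => monomial (m + Finsupp.single j 1) ((m j + 1 : K)⁻¹)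

theorem antideriv_monomial (j : σ) (m : σ →₀ ℕ) (a : K) :
    antideriv j (monomial m a) = monomial (m + Finsupp.single j 1) (a * (m j + 1 : K)⁻¹) := by
  have hbasis : monomial m (1 : K) = basisMonomials σ K m := rfl
  rw [← mul_one a, ← smul_eq_mul, ← smul_monomial, map_smul, hbasis, antideriv,
    Module.Basis.constr_basis, smul_monomial, smul_eq_mul, smul_eq_mul, mul_one]

theorem pderiv_antideriv_self [CharZero K] (j : σ) (p : MvPolynomial σ K) :
    pderiv j (antideriv j p) = p := by
  induction p using MvPolynomial.induction_on' with
  | monomial m a =>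
    have hm : (m j + 1 : K) ≠ 0 := Nat.cast_add_one_ne_zero _
    rw [antideriv_monomial, pderiv_monomial, add_tsub_cancel_right]
    congr 1
    simp only [Finsupp.add_apply, Finsupp.single_eq_same]
    push_cast
    field_simp
  | add p q hp hq => simp only [map_add, hp, hq]

theorem pderiv_antideriv_of_ne {i j : σ} (h : i ≠ j) (p : MvPolynomial σ K) :
    pderiv i (antideriv j p) = antideriv j (pderiv i p) := by
  classical
  induction p using MvPolynomial.induction_on' with
  | monomial m a =>
    rw [antideriv_monomial, pderiv_monomial, pderiv_monomial, antideriv_monomial]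
    have hexp : m + Finsupp.single j 1 - Finsupp.single i 1
        = m - Finsupp.single i 1 + Finsupp.single j 1 := by
      ext k
      rcases eq_or_ne k j with rfl | hkj
      · simp [Finsupp.single_eq_of_ne' h]
      · simp [Finsupp.single_eq_of_ne hkj]
    simp only [hexp, Finsupp.add_apply, Finsupp.tsub_apply, Finsupp.single_eq_of_ne h,
      Finsupp.single_eq_of_ne' h, add_zero, tsub_zero]
    congr 1
    ring
  | add p q hp hq => simp only [map_add, hp, hq]

theorem exists_pderiv_eq_of_pderiv_comm [CharZero K] (F : σ → MvPolynomial σ K)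
    (hF : ∀ i j, pderiv i (F j) = pderiv j (F i)) (s : Finset σ) :
    ∃ P : MvPolynomial σ K, ∀ j ∈ s, pderiv j P = F j := by
  classical
  induction s using Finset.induction_on with
  | empty => exact ⟨0, by simp⟩
  | insert k s hk ih =>
    obtain ⟨P, hP⟩ := ih
    refine ⟨P + antideriv k (F k - pderiv k P), fun j hj => ?_⟩
    rcases Finset.mem_insert.1 hj with rfl | hjs
    · rw [map_add, pderiv_antideriv_self, add_sub_cancel]
    · have hjk : j ≠ k := fun h => hk (h ▸ hjs)
      rw [map_add, pderiv_antideriv_of_ne hjk, map_sub, pderiv_pderiv_comm, hP j hjs, hF,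
        sub_self, map_zero, add_zero]

end MvPolynomial

theorem bracket_coordVF_right {n : ℕ} (V : VF n) (u i : Fin n) :
    bracket V (coordVF u) i = -pderiv u (V i) := by
  have hterm : ∀ j, V j * pderiv j (coordVF u i) - coordVF u j * pderiv j (V i)
      = -(if j = u then pderiv j (V i) else 0) := by
    intro j
    by_cases hiu : i = u <;> by_cases hju : j = u <;> simp [coordVF, hiu, hju]
  simp [bracket, hterm]

theorem bracket_coordVF_left {n : ℕ} (W : VF n) (u i : Fin n) :
    bracket (coordVF u) W i = pderiv u (W i) := by
  have hterm : ∀ j, coordVF u j * pderiv j (W i) - W j * pderiv j (coordVF u i)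
      = if j = u then pderiv j (W i) else 0 := by
    intro j
    by_cases hiu : i = u <;> by_cases hju : j = u <;> simp [coordVF, hiu, hju]
  simp [bracket, hterm]

theorem bracket_coordVF_coordVF {n : ℕ} (u s : Fin n) : bracket (coordVF u) (coordVF s) = 0 := by
  funext i
  by_cases h : i = s <;> simp [bracket_coordVF_left, coordVF, h]

theorem derivation_on_coords_is_inner_general
    (n : ℕ) (M : Set (VF n))
    (hMcoord : ∀ u, coordVF u ∈ M)
    (D : VF n → VF n)
    (hLeib : ∀ V ∈ M, ∀ W ∈ M,
      D (bracket V W) = bracket (D V) W + bracket V (D W)) :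
    ∃ Z : VF n, ∀ u, D (coordVF u) = bracket Z (coordVF u) := by
  -- `D` is not assumed linear; `D 0 = 0` comes out of the case `u = s`.
  have hD0 : ∀ u s i, D 0 i = pderiv u (D (coordVF s) i) - pderiv s (D (coordVF u) i) := by
    intro u s i
    have h := congrFun (hLeib _ (hMcoord u) _ (hMcoord s)) i
    rw [bracket_coordVF_coordVF, Pi.add_apply, bracket_coordVF_right, bracket_coordVF_left] at h
    rw [h, neg_add_eq_sub]
  have hclosed : ∀ i u s, pderiv u (D (coordVF s) i) = pderiv s (D (coordVF u) i) := by
    intro i u s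
    rw [← sub_eq_zero, ← hD0, hD0 u u i, sub_self]
  choose P hP using fun i =>
    exists_pderiv_eq_of_pderiv_comm (fun u => D (coordVF u) i) (hclosed i) Finset.univ
  refine ⟨fun i => -P i, fun u => funext fun i => ?_⟩
  rw [bracket_coordVF_right, map_neg, neg_neg, hP i u (Finset.mem_univ u)]

/-- If `𝔪` is a Lie algebra of polynomial vector fields on ℝⁿ
containing all the coordinate fields `∂ᵤ`, and `D` is a derivation of `𝔪` (with
polynomial coefficient functions `Fᵤᵛ`, automatic here), then there is a polynomial
vector field `Z` with `D(∂ᵤ) = [Z, ∂ᵤ]` for all `u`. -/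
theorem derivation_on_coords_is_inner
    (n : ℕ) (M : Set (VF n))
    (hMcoord : ∀ u, coordVF u ∈ M)
    (hMclosed : ∀ V ∈ M, ∀ W ∈ M, bracket V W ∈ M)
    (D : VF n → VF n)
    (hLeib : ∀ V ∈ M, ∀ W ∈ M,
      D (bracket V W) = bracket (D V) W + bracket V (D W)) :
    ∃ Z : VF n, ∀ u, D (coordVF u) = bracket Z (coordVF u) :=
  derivation_on_coords_is_inner_general n M hMcoord D hLeib
end

section
/- Suppose D is a derivation of 𝔪 = g_{<0}(h) of weight ι ≥ 0 vanishing on all coordinate vector fields, and set D(x_i ∂_n) = Σ_k a_i^k ∂_k for i < n (where r_1 ≤ ... ≤ r_n and x_n is the coordinate of highest weight). Then the matrix (a_i^j)_{i,j<n} is symmetric: a_i^j = a_j^i for all i, j < n. -/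
open MvPolynomial

private lemma homog_aux {n : ℕ} (r : Fin n → ℕ) (x N : Fin n) (hx : x ≠ N) :
    IsHomog r ((r x : ℤ) - r N) (vfOf (X x) N) := by
  funext m
  simp only [bracket, nabla, vfOf, IsHomog]
  by_cases hm : m = N
  · subst hm
    rw [Finset.sum_sub_distrib]
    simp [Finset.sum_ite_eq', mul_ite, ite_mul, pderiv_X, Pi.single_apply, hx, sub_mul]
    rw [smul_eq_C_mul]
    push_cast [map_sub]
    simp [MvPolynomial.C_eq_coe_nat]
    ring
  · simp [hm, Finset.sum_ite_eq', mul_ite, ite_mul, pderiv_X, Pi.single_apply, Ne.symm hm]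

private lemma br_zero_aux {n : ℕ} (i j N : Fin n) (hi : i ≠ N) (hj : j ≠ N) :
    bracket (vfOf (X i) N) (vfOf (X j) N) = 0 := by
  funext m
  simp [bracket, vfOf, mul_ite, ite_mul, pderiv_X, Pi.single_apply, Finset.sum_ite_eq',
    Ne.symm hi, Ne.symm hj, apply_ite (pderiv N)]

private lemma br_const_left {n : ℕ} (b : Fin n → ℝ) (j N : Fin n) :
    bracket (fun k => C (b k)) (vfOf (X j) N) N = C (b j) := by
  simp [bracket, vfOf, mul_ite, ite_mul, pderiv_X, Pi.single_apply, Finset.sum_ite_eq']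

private lemma br_const_right {n : ℕ} (b : Fin n → ℝ) (i N : Fin n) :
    bracket (vfOf (X i) N) (fun k => C (b k)) N = - C (b i) := by
  simp [bracket, vfOf, mul_ite, ite_mul, pderiv_X, Pi.single_apply, Finset.sum_ite_eq']

/-- If `D` is a derivation of `𝔪 = g₋(h)` of weight `ι ≥ 0` that
vanishes on all coordinate vector fields, and `D(xᵢ∂ₙ) = Σₖ aᵢᵏ ∂ₖ` for `i < n`
(where `r₁ ≤ … ≤ rₙ₋₁ < rₙ` and `xₙ` is the top coordinate), then the matrix
`(aᵢʲ)` for `i, j < n` is symmetric. -/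
theorem derivation_matrix_symmetric
    (n : ℕ) (r : Fin (n + 2) → ℕ) (hr : ∀ i, 0 < r i) (hmono : Monotone r)
    (htop : r (⟨n, by omega⟩ : Fin (n + 2)) < r (Fin.last (n + 1)))
    (ι : ℤ) (hι : 0 ≤ ι)
    (D : VF (n + 2) → VF (n + 2))
    (hadd : ∀ V W, D (V + W) = D V + D W)
    (hsmul : ∀ (c : ℝ) V, D (c • V) = c • D V)
    (hweight : ∀ (k : ℤ) V, k < 0 → IsHomog r k V → IsHomog r (k + ι) (D V))
    (hLeib : ∀ V ∈ negPart r, ∀ W ∈ negPart r,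
      D (bracket V W) = bracket (D V) W + bracket V (D W))
    (hcoord : ∀ i, D (coordVF i) = 0)
    (a : Fin (n + 2) → Fin (n + 2) → ℝ)
    (hDval : ∀ i, i ≠ Fin.last (n + 1) →
      D (vfOf (X i) (Fin.last (n + 1))) = fun k => C (a i k)) :
    ∀ i j, i ≠ Fin.last (n + 1) → j ≠ Fin.last (n + 1) → a i j = a j i := by
  intro i j hi hj
  have hD0 : D 0 = 0 := by simpa using hsmul 0 0
  have hmem : ∀ x : Fin (n + 2), x ≠ Fin.last (n + 1) →
      vfOf (X x) (Fin.last (n + 1)) ∈ negPart r := by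
    intro x hx
    refine Submodule.subset_span ⟨(r x : ℤ) - r (Fin.last (n + 1)), ?_, homog_aux r _ _ hx⟩
    have hx' : x ≤ (⟨n, by omega⟩ : Fin (n + 2)) := by
      rw [Fin.le_def]
      have : x.val ≠ n + 1 := fun h => hx (Fin.ext h)
      have := x.isLt
      simp only []
      omega
    have h1 := hmono hx'
    omega
  have key := hLeib _ (hmem i hi) _ (hmem j hj)
  rw [br_zero_aux i j _ hi hj, hD0, hDval i hi, hDval j hj] at key
  have key2 := congrFun key.symm (Fin.last (n + 1))
  simp only [Pi.add_apply, br_const_left, br_const_right, Pi.zero_apply] at key2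
  have : C (a i j) = (C (a j i) : MvPolynomial (Fin (n + 2)) ℝ) := by
    linear_combination key2
  exact MvPolynomial.C_injective _ _ this
end
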